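/- arXiv:1310.0396 — 6 statements merged into one kernel-verified Lean document; each statement's English description precedes it below -/
import Mathlib

section
/- A nonempty product of nonempty preordered sets (with the pointwise order) is a foot if and only if every factor is a foot and all but finitely many factors have a least element. -/
/-- A preordered set is a *foot* if it is the upper set of a finite subset:
there is a finite `F` such that every element lies above some member of `F`. -/
def IsFoot (P : Type*) [Preorder P] : Prop :=
  ∃ F : Set P, F.Finite ∧ ∀ y : P, ∃ x ∈ F, x ≤ y

/-- A nonempty product of nonempty preorders (pointwise order) is a foot iff every
factor is a foot and all but finitely many factors have a least element. -/
theorem stmt_10 {I : Type*} (X : I → Type*) [∀ i, Preorder (X i)] [∀ i, Nonempty (X i)] :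
    IsFoot (∀ i, X i) ↔
      (∀ i, IsFoot (X i)) ∧ {i : I | ¬ ∃ m : X i, ∀ y : X i, m ≤ y}.Finite := by
  classical
  constructor
  · rintro ⟨F, hFfin, hFcov⟩
    constructor
    · intro i
      refine ⟨(fun f => f i) '' F, hFfin.image _, fun y => ?_⟩
      obtain ⟨x, hx, hxy⟩ := hFcov (Function.update (Classical.arbitrary _) i y)
      refine ⟨x i, ⟨x, hx, rfl⟩, ?_⟩
      have := hxy i
      simpa using this
    · by_contra hinf
      rw [← Set.not_infinite, not_not] at hinf
      haveI := hFfin.fintype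
      obtain ⟨e, he⟩ := exists_injective_nat (↥F)
      set S := {i : I | ¬ ∃ m : X i, ∀ y : X i, m ≤ y} with hSdef
      let emb := hinf.natEmbedding
      let φ : ↥F → I := fun f => (emb (e f) : I)
      have hφS : ∀ f, φ f ∈ S := fun f => (emb (e f)).2
      have hφinj : Function.Injective φ := fun a b h =>
        he (emb.injective (Subtype.ext h))
      have key : ∀ i, ∃ z : X i, ∀ f : ↥F, φ f = i → ¬ (f : ∀ j, X j) i ≤ z := by
        intro i
        by_cases h : ∃ f : ↥F, φ f = i
        · obtain ⟨f0, hf0⟩ := h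
          have hSi : ¬ ∃ mm : X i, ∀ y : X i, mm ≤ y := hf0 ▸ hφS f0
          push_neg at hSi
          obtain ⟨z, hz⟩ := hSi ((f0 : ∀ j, X j) i)
          exact ⟨z, fun f hf => by rw [hφinj (hf.trans hf0.symm)]; exact hz⟩
        · exact ⟨Classical.arbitrary _, fun f hf => absurd ⟨f, hf⟩ h⟩
      choose z hz using key
      obtain ⟨x, hx, hxz⟩ := hFcov z
      exact hz (φ ⟨x, hx⟩) ⟨x, hx⟩ rfl (hxz _)
  · rintro ⟨hfoot, hS⟩
    choose F hFfin hFcov using hfoot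
    choose c hc1 hc2 using hFcov
    set S := {i : I | ¬ ∃ m : X i, ∀ y : X i, m ≤ y} with hSdef
    have hm : ∀ i, ∃ mm : X i, i ∉ S → ∀ y : X i, mm ≤ y := by
      intro i
      by_cases h : i ∈ S
      · exact ⟨Classical.arbitrary _, fun h' => absurd h h'⟩
      · simp only [hSdef, Set.mem_setOf_eq, not_not] at h
        obtain ⟨mm, hmm⟩ := h
        exact ⟨mm, fun _ => hmm⟩
    choose m hmle using hm
    let T : ∀ i, Set (X i) := fun i => if i ∈ S then F i else {m i}
    set G := {g : ∀ i, X i | ∀ i, g i ∈ T i} with hGdef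
    have hGfin : G.Finite := by
      haveI := hS.fintype
      have himg : ((fun g (i : S) => g (i : I)) '' G).Finite := by
        refine Set.Finite.subset (Set.Finite.pi (t := fun i : S => F (i : I))
          (fun i => hFfin _)) ?_
        rintro h ⟨g, hg, rfl⟩
        intro i _
        have := hg (i : I)
        simpa [T, if_pos i.2] using this
      refine Set.Finite.of_finite_image himg ?_
      intro g hg g' hg' hgg'
      funext i
      by_cases h : i ∈ S
      · exact congrFun hgg' ⟨i, h⟩
      · have h1 := hg i
        have h2 := hg' i
        simp only [T, if_neg h, Set.mem_singleton_iff] at h1 h2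
        rw [h1, h2]
    refine ⟨G, hGfin, fun y => ?_⟩
    refine ⟨fun i => if h : i ∈ S then c i (y i) else m i, ?_, ?_⟩
    · intro i
      by_cases h : i ∈ S <;> simp [T, h, hc1]
    · intro i
      by_cases h : i ∈ S
      · simpa [h] using hc2 i (y i)
      · simpa [h] using hmle i h (y i)
end

section
/- A nonempty product of nonempty topological spaces is hypercompact if and only if all factors are hypercompact and all but finitely many factors are supercompact. -/
/-- A topological space is *hypercompact* if there is a finite set `F` such that every
point lies above some member of `F` in the specialization preorder
(`f ≤ y` iff `f ∈ closure {y}`). -/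
def Hypercompact (X : Type*) [TopologicalSpace X] : Prop :=
  ∃ F : Set X, F.Finite ∧ ∀ y : X, ∃ f ∈ F, f ∈ closure ({y} : Set X)

/-- A topological space is *supercompact* if it has a dense point: some `d` lies below
every point in the specialization preorder. -/
def Supercompact (X : Type*) [TopologicalSpace X] : Prop :=
  ∃ d : X, ∀ y : X, d ∈ closure ({y} : Set X)

/-- A nonempty product of nonempty topological spaces is hypercompact iff all factors
are hypercompact and all but finitely many are supercompact. -/
theorem stmt_11 {I : Type*} (X : I → Type*) [∀ i, TopologicalSpace (X i)]
    [∀ i, Nonempty (X i)] :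
    Hypercompact (∀ i, X i) ↔
      (∀ i, Hypercompact (X i)) ∧ {i : I | ¬ Supercompact (X i)}.Finite := by
  classical
  constructor
  · rintro ⟨F, hF, hcov⟩
    constructor
    · intro i
      refine ⟨(fun f : (∀ j, X j) => f i) '' F, hF.image _, fun y => ?_⟩
      obtain ⟨f, hfF, hfc⟩ := hcov (Function.update (Classical.arbitrary _) i y)
      refine ⟨f i, ⟨f, hfF, rfl⟩, ?_⟩
      have hspec : Function.update (Classical.arbitrary _) i y ⤳ f :=
        specializes_iff_mem_closure.2 hfc
      have := (specializes_pi.1 hspec) i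
      rw [Function.update_self] at this
      exact specializes_iff_mem_closure.1 this
    · by_contra hB
      set B := {i : I | ¬ Supercompact (X i)} with hBdef
      have hBinf : B.Infinite := hB
      have : Finite ↥F := hF.to_subtype
      have : Infinite ↥B := hBinf.to_subtype
      obtain ⟨e1⟩ := countable_iff_nonempty_embedding.1 (inferInstance : Countable ↥F)
      let e : ↥F ↪ ↥B := e1.trans (Infinite.natEmbedding ↥B)
      let ι : ↥F → I := fun f => (e f : I)
      have hι : Function.Injective ι := fun a b h =>
        e.injective (Subtype.coe_injective h)
      have hιB : ∀ f, ι f ∈ B := fun f => (e f).2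
      have hP : ∀ i, ∃ z : X i, ∀ f : ↥F, ι f = i →
          (f : ∀ j, X j) i ∉ closure ({z} : Set (X i)) := by
        intro i
        by_cases h : ∃ f : ↥F, ι f = i
        · obtain ⟨f, rfl⟩ := h
          have hns : ¬ Supercompact (X (ι f)) := hιB f
          rw [Supercompact] at hns
          push_neg at hns
          obtain ⟨z, hz⟩ := hns ((f : ∀ j, X j) (ι f))
          exact ⟨z, fun f' hf' => by rw [hι hf']; exact hz⟩
        · exact ⟨Classical.arbitrary _, fun f hf => absurd ⟨f, hf⟩ h⟩
      choose y hy using hP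
      obtain ⟨f, hfF, hfc⟩ := hcov y
      have hspec : y ⤳ f := specializes_iff_mem_closure.2 hfc
      exact hy (ι ⟨f, hfF⟩) ⟨f, hfF⟩ rfl
        (specializes_iff_mem_closure.1 ((specializes_pi.1 hspec) _))
  · rintro ⟨hhyp, hB⟩
    set B := {i : I | ¬ Supercompact (X i)} with hBdef
    choose Fi hFi hFicov using hhyp
    have hd : ∀ i, ∃ d : X i, i ∉ B → ∀ y : X i, d ∈ closure ({y} : Set (X i)) := by
      intro i
      by_cases h : i ∈ B
      · exact ⟨Classical.arbitrary _, fun h' => absurd h h'⟩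
      · obtain ⟨d, hd⟩ := not_not.1 h
        exact ⟨d, fun _ => hd⟩
    choose d hdprop using hd
    have : Finite ↥B := hB.to_subtype
    let g : (∀ i : ↥B, X i) → (∀ i, X i) := fun h i =>
      if hi : i ∈ B then h ⟨i, hi⟩ else d i
    let T : Set (∀ i : ↥B, X i) := Set.pi Set.univ (fun i => Fi i)
    have hTfin : T.Finite := Set.Finite.pi (fun i => hFi i)
    refine ⟨g '' T, hTfin.image g, fun y => ?_⟩
    have hpick : ∀ i : ↥B, ∃ z ∈ Fi (i : I), z ∈ closure ({y i} : Set (X i)) :=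
      fun i => hFicov (i : I) (y (i : I))
    choose h hh1 hh2 using hpick
    refine ⟨g h, ⟨h, fun i _ => hh1 i, rfl⟩, ?_⟩
    rw [← specializes_iff_mem_closure, specializes_pi]
    intro i
    rw [specializes_iff_mem_closure]
    by_cases hi : i ∈ B
    · have : g h i = h ⟨i, hi⟩ := dif_pos hi
      rw [this]
      exact hh2 ⟨i, hi⟩
    · have : g h i = d i := dif_neg hi
      rw [this]
      exact hdprop i hi (y i)
end

section
/- A hypercompact topological space has only finitely many connected components. -/
/-- A hypercompact topological space has only finitely many connected components. -/
theorem stmt_14 {X : Type*} [TopologicalSpace X] (hX : Hypercompact X) :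
    (Set.range (connectedComponent : X → Set X)).Finite := by
  obtain ⟨F, hF, h⟩ := hX
  apply (hF.image connectedComponent).subset
  rintro _ ⟨y, rfl⟩
  obtain ⟨f, hfF, hfc⟩ := h y
  have hsub : closure ({y} : Set X) ⊆ connectedComponent y :=
    closure_minimal (Set.singleton_subset_iff.2 mem_connectedComponent)
      isClosed_connectedComponent
  exact ⟨f, hfF, (connectedComponent_eq (hsub hfc)).symm⟩
end

section
/- Every point of a locally hypercompact topological space has a neighborhood base consisting of connected hypercompact sets; in particular, every locally hypercompact space is locally connected. -/
open Set

variable {X : Type*} [TopologicalSpace X]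

/-- The saturation-style upper set of a set `H` in the specialization preorder:
all points lying above some point of `H` (`h ≤ y` iff `h ∈ closure {y}`). -/
def upSet (H : Set X) : Set X := {y : X | ∃ h ∈ H, h ∈ closure ({y} : Set X)}

/-- A subset `H` is *hypercompact* if its upper set is generated by a finite subset
`F ⊆ H`: `↑F = ↑H`. -/
def HypercompactSet (H : Set X) : Prop :=
  ∃ F : Set X, F ⊆ H ∧ F.Finite ∧ upSet F = upSet H

/-- A space is *locally hypercompact* if every point has a neighborhood base of
hypercompact sets. -/
def LocallyHypercompact (X : Type*) [TopologicalSpace X] : Prop :=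
  ∀ x : X, ∀ U ∈ nhds x, ∃ H ∈ nhds x, H ⊆ U ∧ HypercompactSet H

lemma self_mem_upSet {f : X} : f ∈ upSet ({f} : Set X) :=
  ⟨f, rfl, subset_closure rfl⟩

lemma piece_preconnected (f : X) (S : Set X) (hf : f ∈ S) :
    IsPreconnected (upSet {f} ∩ S) := by
  apply isPreconnected_of_forall f
  intro y hy
  have hfc : f ∈ closure ({y} : Set X) := by
    obtain ⟨h, hh, hc⟩ := hy.1
    rw [mem_singleton_iff] at hh
    exact hh ▸ hc
  refine ⟨insert f {y}, ?_, mem_insert _ _, mem_insert_of_mem _ rfl, ?_⟩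
  · intro z hz
    rcases hz with rfl | hz
    · exact ⟨self_mem_upSet, hf⟩
    · rw [mem_singleton_iff] at hz; exact hz ▸ hy
  · apply isPreconnected_singleton.subset_closure (subset_insert _ _)
    intro z hz
    rcases hz with rfl | hz
    · exact hfc
    · rw [mem_singleton_iff] at hz; exact hz ▸ subset_closure rfl

lemma exists_connected_hypercompact (hX : LocallyHypercompact X) (x : X) (U : Set X)
    (hU : U ∈ nhds x) :
    ∃ H ∈ nhds x, H ⊆ U ∧ HypercompactSet H ∧ IsConnected H := by
  obtain ⟨H, hHx, hHU, F, hFH, hFfin, hFsat⟩ := hX x U hU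
  set P : X → Set X := fun f => upSet {f} ∩ U with hP
  set K : Set X := ⋃ f ∈ F, P f with hK
  have hFU : ∀ f ∈ F, f ∈ U := fun f hf => hHU (hFH hf)
  have hfP : ∀ f ∈ F, f ∈ P f := fun f hf => ⟨self_mem_upSet, hFU f hf⟩
  have hPK : ∀ f ∈ F, P f ⊆ K := fun f hf => subset_biUnion_of_mem hf
  have hKU : K ⊆ U := by
    intro z hz
    simp only [hK, mem_iUnion] at hz
    obtain ⟨f, hf, _, hzU⟩ := hz
    exact hzU
  have hHK : H ⊆ K := by
    intro h hh
    have hhF : h ∈ upSet F := by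
      rw [hFsat]; exact ⟨h, hh, subset_closure rfl⟩
    obtain ⟨f, hf, hfc⟩ := hhF
    exact hPK f hf ⟨⟨f, rfl, hfc⟩, hHU hh⟩
  have hxH : x ∈ H := mem_of_mem_nhds hHx
  have hxK : x ∈ K := hHK hxH
  set L : Set X := connectedComponentIn K x with hL
  have hxL : x ∈ L := mem_connectedComponentIn hxK
  have hLK : L ⊆ K := connectedComponentIn_subset K x
  have hLpre : IsPreconnected L := isPreconnected_connectedComponentIn
  have hQ : ∀ f ∈ F, ¬ Disjoint (K ∩ closure (P f)) L → K ∩ closure (P f) ⊆ L := by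
    intro f hf hnd
    rw [Set.not_disjoint_iff] at hnd
    obtain ⟨y, hyQ, hyL⟩ := hnd
    have hQpre : IsPreconnected (K ∩ closure (P f)) := by
      apply (piece_preconnected f U (hFU f hf)).subset_closure
      · exact subset_inter (hPK f hf) subset_closure
      · exact inter_subset_right
    have hu : IsPreconnected (L ∪ (K ∩ closure (P f))) :=
      hLpre.union y hyL hyQ hQpre
    have hsub : L ∪ (K ∩ closure (P f)) ⊆ L :=
      hu.subset_connectedComponentIn (Or.inl hxL) (union_subset hLK inter_subset_left)
    exact subset_union_right.trans hsub
  set B : Set X := {f ∈ F | Disjoint (K ∩ closure (P f)) L} with hB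
  have hBfin : B.Finite := hFfin.subset (sep_subset _ _)
  have hA : IsClosed (⋃ f ∈ B, closure (P f)) :=
    hBfin.isClosed_biUnion (fun f _ => isClosed_closure)
  have hxA : x ∉ ⋃ f ∈ B, closure (P f) := by
    intro hx
    simp only [mem_iUnion] at hx
    obtain ⟨f, hfB, hxc⟩ := hx
    exact absurd hxL (disjoint_left.mp hfB.2 ⟨hxK, hxc⟩)
  have hLnhds : L ∈ nhds x := by
    have hKnhds : K ∈ nhds x := Filter.mem_of_superset hHx hHK
    have hOpen : (⋃ f ∈ B, closure (P f))ᶜ ∈ nhds x := hA.isOpen_compl.mem_nhds hxA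
    refine Filter.mem_of_superset (Filter.inter_mem hKnhds hOpen) ?_
    rintro z ⟨hzK, hzA⟩
    have hz' := hzK
    simp only [hK, mem_iUnion] at hz'
    obtain ⟨f, hf, hzP⟩ := hz'
    by_cases hfB : Disjoint (K ∩ closure (P f)) L
    · have hfB' : f ∈ B := ⟨hf, hfB⟩
      exact absurd (mem_biUnion hfB' (subset_closure hzP)) hzA
    · exact hQ f hf hfB ⟨hzK, subset_closure hzP⟩
  refine ⟨L, hLnhds, hLK.trans hKU,
    ⟨F ∩ L, inter_subset_right, hFfin.inter_of_left _, ?_⟩,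
    isConnected_connectedComponentIn_iff.mpr hxK⟩
  apply Set.Subset.antisymm
  · rintro z ⟨f, ⟨hfF, hfL⟩, hc⟩
    exact ⟨f, hfL, hc⟩
  · rintro z ⟨k, hkL, hkc⟩
    have hz' := hLK hkL
    simp only [hK, mem_iUnion] at hz'
    obtain ⟨f, hf, hkP⟩ := hz'
    have hfL : f ∈ L := by
      apply hQ f hf ?_ ⟨hPK f hf (hfP f hf), subset_closure (hfP f hf)⟩
      rw [Set.not_disjoint_iff]
      exact ⟨k, ⟨hLK hkL, subset_closure hkP⟩, hkL⟩
    have hfck : f ∈ closure ({k} : Set X) := by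
      obtain ⟨h, hh, hc'⟩ := hkP.1
      rw [mem_singleton_iff] at hh
      exact hh ▸ hc'
    have hmono : closure ({k} : Set X) ⊆ closure ({z} : Set X) :=
      closure_minimal (singleton_subset_iff.mpr hkc) isClosed_closure
    exact ⟨f, ⟨hf, hfL⟩, hmono hfck⟩

/-- Every point of a locally hypercompact space has a neighborhood base of connected
hypercompact sets; in particular, such a space is locally connected. -/
theorem stmt_16 (hX : LocallyHypercompact X) :
    (∀ x : X, ∀ U ∈ nhds x, ∃ H ∈ nhds x, H ⊆ U ∧ HypercompactSet H ∧ IsConnected H) ∧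
      LocallyConnectedSpace X := by
  refine ⟨fun x U hU => exists_connected_hypercompact hX x U hU, ?_⟩
  rw [locallyConnectedSpace_iff_connected_subsets]
  intro x U hU
  obtain ⟨H, hH, hHU, _, hc⟩ := exists_connected_hypercompact hX x U hU
  exact ⟨H, hH, hc.isPreconnected, hHU⟩
end

section
/- Assuming the Continuum Hypothesis, if a product of 2^ω many nonempty topological spaces is such that none of the factors has the property that every ordinary sequence converges (i.e., none is ω⁺-filtered), then the product is not sequentially compact; equivalently, if a product of nonempty spaces is sequentially compact, then all but at most countably many factors are ω⁺-filtered. -/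
open Cardinal

universe u

/-- `X` is ω⁺-filtered: every countable set of points has a lower bound in the
specialization preorder (`b ≤ y` iff `b ∈ closure {y}`); equivalently, every
sequence in `X` converges. -/
def OmegaPlusFiltered (X : Type u) [TopologicalSpace X] : Prop :=
  ∀ S : Set X, S.Countable → ∃ b : X, ∀ y ∈ S, b ∈ closure ({y} : Set X)

lemma aux_seq {X : Type u} [TopologicalSpace X] [Nonempty X] (h : ¬ OmegaPlusFiltered X) :
    ∃ e : ℕ → X, ∀ b : X, ∃ m : ℕ, b ∉ closure ({e m} : Set X) := by
  rw [OmegaPlusFiltered] at h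
  push_neg at h
  obtain ⟨S, hSc, hS⟩ := h
  have hne : S.Nonempty := by
    obtain ⟨y, hy, -⟩ := hS (Classical.arbitrary X)
    exact ⟨y, hy⟩
  obtain ⟨e, he⟩ := hSc.exists_eq_range hne
  refine ⟨e, fun b => ?_⟩
  obtain ⟨y, hy, hb⟩ := hS b
  rw [he] at hy
  obtain ⟨m, rfl⟩ := hy
  exact ⟨m, hb⟩

/-- (CH) If a product of nonempty topological spaces is sequentially compact, then all
but at most countably many factors are ω⁺-filtered. -/
theorem stmt_18 (hCH : (2 : Cardinal.{0}) ^ (ℵ₀ : Cardinal.{0}) = Order.succ ℵ₀)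
    {I : Type u} (X : I → Type u) [∀ i, TopologicalSpace (X i)] [∀ i, Nonempty (X i)]
    (h : SeqCompactSpace (∀ i, X i)) :
    {i : I | ¬ OmegaPlusFiltered (X i)}.Countable := by

  by_contra hbad
  set B := {i : I | ¬ OmegaPlusFiltered (X i)} with hB
  -- get an embedding from strict mono sequences into B
  have hcard : Nonempty ({f : ℕ → ℕ // StrictMono f} ↪ ↥B) := by
    rw [← Cardinal.lift_mk_le']
    have h1 : #{f : ℕ → ℕ // StrictMono f} ≤ 2 ^ (ℵ₀ : Cardinal.{0}) := by
      calc #{f : ℕ → ℕ // StrictMono f} ≤ #(ℕ → ℕ) := Cardinal.mk_subtype_le _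
        _ = (ℵ₀ : Cardinal.{0}) ^ (ℵ₀ : Cardinal.{0}) := by
            rw [← Cardinal.power_def, Cardinal.mk_nat]
        _ = 2 ^ (ℵ₀ : Cardinal.{0}) := Cardinal.power_self_eq le_rfl
    have h2 : (Order.succ ℵ₀ : Cardinal.{u}) ≤ #↥B := by
      refine Order.succ_le_of_lt ?_
      rw [← Cardinal.le_aleph0_iff_set_countable, not_le] at hbad
      exact hbad
    calc Cardinal.lift.{u} #{f : ℕ → ℕ // StrictMono f}
        ≤ Cardinal.lift.{u} (2 ^ (ℵ₀ : Cardinal.{0})) := Cardinal.lift_le.mpr h1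
      _ = Cardinal.lift.{u, 0} (Order.succ (ℵ₀ : Cardinal.{0})) := by rw [hCH]
      _ = Order.succ ℵ₀ := by rw [Cardinal.lift_succ, Cardinal.lift_aleph0]
      _ ≤ #↥B := h2
      _ = Cardinal.lift.{0} #↥B := (Cardinal.lift_uzero _).symm
  obtain ⟨g⟩ := hcard
  -- bad sequences in each factor
  have he : ∀ i : I, ∃ e : ℕ → X i, i ∈ B → ∀ b : X i, ∃ m : ℕ, b ∉ closure ({e m} : Set (X i)) := by
    intro i
    by_cases hi : i ∈ B
    · obtain ⟨e, hee⟩ := aux_seq hi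
      exact ⟨e, fun _ => hee⟩
    · exact ⟨fun _ => Classical.arbitrary _, fun h' => absurd h' hi⟩
  choose e hee using he
  classical
  -- the sequence in the product
  set x : ℕ → ∀ i, X i := fun n i =>
    if h : ∃ p : {f : ℕ → ℕ // StrictMono f} × ℕ, (g p.1 : I) = i ∧ p.1.1 p.2 = n then
      e i ((h.choose.2).unpair.1)
    else e i 0 with hx
  have key : ∀ (φ : {f : ℕ → ℕ // StrictMono f}) (k : ℕ),
      x (φ.1 k) (g φ : I) = e (g φ : I) (k.unpair.1) := by
    intro φ k
    have hex : ∃ p : {f : ℕ → ℕ // StrictMono f} × ℕ,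
        (g p.1 : I) = (g φ : I) ∧ p.1.1 p.2 = φ.1 k := ⟨(φ, k), rfl, rfl⟩
    rw [hx]
    simp only [dif_pos hex]
    have hspec := hex.choose_spec
    have h1 : hex.choose.1 = φ := by
      have := hspec.1
      exact g.injective (Subtype.coe_injective this)
    have h2 : hex.choose.2 = k := by
      have := hspec.2
      rw [h1] at this
      exact φ.2.injective this
    rw [h2]
  obtain ⟨a, φ, hφ, hconv⟩ := SeqCompactSpace.tendsto_subseq x
  set i : I := (g ⟨φ, hφ⟩ : I) with hi
  have hiB : i ∈ B := (g ⟨φ, hφ⟩).2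
  have hconvi : Filter.Tendsto (fun k => x (φ k) i) Filter.atTop (nhds (a i)) :=
    ((continuous_apply i).tendsto a).comp hconv
  have hconvi' : Filter.Tendsto (fun k : ℕ => e i (k.unpair.1)) Filter.atTop (nhds (a i)) := by
    refine hconvi.congr fun k => ?_
    exact key ⟨φ, hφ⟩ k
  obtain ⟨m, hm⟩ := hee i hiB (a i)
  refine hm ?_
  rw [mem_closure_iff]
  intro U hU haU
  have := (hconvi'.eventually (hU.mem_nhds haU)).exists_forall_of_atTop
  obtain ⟨K, hK⟩ := this
  have hk := hK (Nat.pair m K) (Nat.right_le_pair m K)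
  rw [Nat.unpair_pair] at hk
  exact ⟨e i m, hk, rfl⟩
end

section
/- A product of countably many sequentially compact topological spaces together with arbitrarily many ω⁺-filtered spaces is sequentially compact; in particular, if all factors of a product are sequentially compact and all but countably many are ω⁺-filtered, the product is sequentially compact. -/
open Cardinal

universe u

open Filter Set Topology

/-- Diagonal argument: a countable product of sequentially compact spaces admits, for every
sequence, a single subsequence converging in every coordinate. -/
theorem diag_subseq {Y : ℕ → Type*} [∀ k, TopologicalSpace (Y k)] [∀ k, SeqCompactSpace (Y k)]
    (u : ℕ → ∀ k, Y k) :
    ∃ φ : ℕ → ℕ, StrictMono φ ∧ ∀ k, ∃ x, Tendsto (fun n => u (φ n) k) atTop (𝓝 x) := by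
  have key : ∀ (k : ℕ) (ψ : ℕ → ℕ), ∃ θ : ℕ → ℕ, StrictMono θ ∧
      ∃ x, Tendsto (fun n => u (ψ (θ n)) k) atTop (𝓝 x) := by
    intro k ψ
    obtain ⟨x, θ, hθ, hx⟩ := SeqCompactSpace.tendsto_subseq (fun n => (u (ψ n) k))
    exact ⟨θ, hθ, x, hx⟩
  choose θ hθmono hθconv using key
  set Ψ : ℕ → ℕ → ℕ := fun k => Nat.rec id (fun k ψ => ψ ∘ θ k ψ) k with hΨ
  have hΨsucc : ∀ k, Ψ (k + 1) = Ψ k ∘ θ k (Ψ k) := fun k => rfl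
  have hΨmono : ∀ k, StrictMono (Ψ k) := by
    intro k
    induction k with
    | zero => exact strictMono_id
    | succ k ih => exact ih.comp (hθmono k (Ψ k))
  have hfac : ∀ k l, k ≤ l → ∃ ρ : ℕ → ℕ, StrictMono ρ ∧ Ψ l = Ψ k ∘ ρ := by
    intro k l hkl
    induction l with
    | zero =>
      refine ⟨id, strictMono_id, ?_⟩
      rw [Nat.le_zero.mp hkl]
      rfl
    | succ l ih =>
      rcases Nat.eq_or_lt_of_le hkl with h | h
      · exact ⟨id, strictMono_id, by rw [h]; rfl⟩
      · obtain ⟨ρ, hρ, hf⟩ := ih (Nat.lt_succ_iff.mp h)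
        refine ⟨ρ ∘ θ l (Ψ l), hρ.comp (hθmono l (Ψ l)), ?_⟩
        rw [hΨsucc l, hf]
        rfl
  refine ⟨fun n => Ψ (n + 1) n, strictMono_nat_of_lt_succ fun n => ?_, fun k => ?_⟩
  · calc Ψ (n + 1) n < Ψ (n + 1) (n + 1) := (hΨmono (n + 1)) (Nat.lt_succ_self n)
      _ ≤ Ψ (n + 1) (θ (n + 1) (Ψ (n + 1)) (n + 1)) :=
        (hΨmono (n + 1)).monotone (hθmono (n + 1) (Ψ (n + 1))).le_apply
      _ = Ψ (n + 2) (n + 1) := rfl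
  · obtain ⟨x, hx⟩ := hθconv k (Ψ k)
    have hx' : Tendsto (fun n => u (Ψ (k + 1) n) k) atTop (𝓝 x) := hx
    refine ⟨x, ?_⟩
    rw [tendsto_atTop'] at hx' ⊢
    intro U hU
    obtain ⟨N, hN⟩ := hx' U hU
    refine ⟨max N (k + 1), fun n hn => ?_⟩
    obtain ⟨ρ, hρ, hfn⟩ := hfac (k + 1) (n + 1) (by omega)
    have heq : Ψ (n + 1) n = Ψ (k + 1) (ρ n) := congrFun hfn n
    show u (Ψ (n + 1) n) k ∈ U
    rw [heq]
    exact hN (ρ n) (le_trans (le_trans (le_max_left _ _) hn) hρ.le_apply)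

/-- In an ω⁺-filtered space, every sequence converges. -/
theorem OmegaPlusFiltered.tendsto {Z : Type*} [TopologicalSpace Z] (h : OmegaPlusFiltered Z)
    (v : ℕ → Z) : ∃ b, Tendsto v atTop (𝓝 b) := by
  obtain ⟨b, hb⟩ := h (Set.range v) (Set.countable_range v)
  refine ⟨b, Filter.tendsto_def.mpr fun U hU => ?_⟩
  obtain ⟨V, hVU, hVopen, hbV⟩ := mem_nhds_iff.mp hU
  refine Filter.univ_mem' fun n => ?_
  have := hb (v n) (Set.mem_range_self n)
  have hvn : v n ∈ V := by
    rcases (mem_closure_iff.mp this) V hVopen hbV with ⟨z, hzV, hz⟩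
    rwa [Set.mem_singleton_iff.mp hz] at hzV
  exact hVU hvn

/-- If all factors of a product of nonempty topological spaces are sequentially compact
and all but countably many are ω⁺-filtered, then the product is sequentially compact. -/
theorem stmt_19 {I : Type u} (X : I → Type u) [∀ i, TopologicalSpace (X i)]
    [∀ i, Nonempty (X i)]
    (h1 : ∀ i, SeqCompactSpace (X i))
    (h2 : {i : I | ¬ OmegaPlusFiltered (X i)}.Countable) :
    SeqCompactSpace (∀ i, X i) := by
  constructor
  intro u _
  -- get a subsequence converging on all "bad" coordinates
  have hφ : ∃ φ : ℕ → ℕ, StrictMono φ ∧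
      ∀ i ∈ {i : I | ¬ OmegaPlusFiltered (X i)},
        ∃ x, Tendsto (fun n => u (φ n) i) atTop (𝓝 x) := by
    rcases Set.eq_empty_or_nonempty {i : I | ¬ OmegaPlusFiltered (X i)} with he | hne
    · exact ⟨id, strictMono_id, by rw [he]; simp⟩
    · obtain ⟨f, hf⟩ := h2.exists_eq_range hne
      obtain ⟨φ, hφ, hconv⟩ := diag_subseq (Y := fun k => X (f k)) (fun n k => u n (f k))
      refine ⟨φ, hφ, fun i hi => ?_⟩
      rw [hf] at hi
      obtain ⟨k, rfl⟩ := hi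
      exact hconv k
  obtain ⟨φ, hφmono, hφconv⟩ := hφ
  have H : ∀ i, ∃ x : X i, Tendsto (fun n => u (φ n) i) atTop (𝓝 x) := by
    intro i
    by_cases hi : OmegaPlusFiltered (X i)
    · exact hi.tendsto _
    · exact hφconv i hi
  choose L hL using H
  refine ⟨L, Set.mem_univ _, φ, hφmono, ?_⟩
  rw [tendsto_pi_nhds]
  exact fun i => hL i
end
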